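/- arXiv:2003.04775 — 6 statements merged into one kernel-verified Lean document; each statement's English description precedes it below -/
import Mathlib

section
/- Let A be an n×n binary (0/1) matrix and h ∈ [0,1]ⁿ. Then there exists a binary vector h' ∈ {0,1}ⁿ such that ∑_{i≠j} |A_{ij} − h'_i h'_j| ≤ ∑_{i≠j} |A_{ij} − h_i h_j|. -/
/-!
The objective `x ↦ ∑_{i ≠ j} |A i j - x i * x j|` is affine in each coordinate on the cube
`[0,1]ⁿ`: no off-diagonal term contains `x k` twice, and for `a ∈ {0,1}` and `c ∈ [0,1]` the sign
of `a - t * c` is the same for all `t ∈ [0,1]`. Rounding the coordinates one at a time, each to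
whichever endpoint does not increase the objective, therefore ends at a binary vector.
-/

open Finset Function Set

lemma abs_sub_mul_eq_affine {a c t : ℝ} (ha : a = 0 ∨ a = 1) (hc : c ∈ Icc (0 : ℝ) 1)
    (ht : t ∈ Icc (0 : ℝ) 1) : |a - t * c| = (1 - t) * |a| + t * |a - c| := by
  obtain ⟨hc0, hc1⟩ := hc
  obtain ⟨ht0, ht1⟩ := ht
  rcases ha with rfl | rfl
  · rw [zero_sub, abs_neg, abs_of_nonneg (by positivity), abs_zero, zero_sub, abs_neg,
      abs_of_nonneg hc0]
    ring
  · rw [abs_of_nonneg (by nlinarith), abs_one, abs_of_nonneg (by linarith)]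
    ring

section Multiaffine

variable {ι : Type*} [DecidableEq ι]

lemma exists_update_le_of_affine (f : (ι → ℝ) → ℝ) (x : ι → ℝ) (k : ι)
    (hxk : x k ∈ Icc (0 : ℝ) 1)
    (hf : f x = (1 - x k) * f (update x k 0) + x k * f (update x k 1)) :
    ∃ b : ℝ, (b = 0 ∨ b = 1) ∧ f (update x k b) ≤ f x := by
  obtain ⟨h0, h1⟩ := hxk
  rcases le_total (f (update x k 0)) (f (update x k 1)) with hle | hle
  · exact ⟨0, Or.inl rfl, by nlinarith⟩
  · exact ⟨1, Or.inr rfl, by nlinarith⟩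

lemma exists_binary_le_of_multiaffine [Fintype ι] (f : (ι → ℝ) → ℝ)
    (hf : ∀ x : ι → ℝ, (∀ i, x i ∈ Icc (0 : ℝ) 1) → ∀ k,
      f x = (1 - x k) * f (update x k 0) + x k * f (update x k 1))
    (x : ι → ℝ) (hx : ∀ i, x i ∈ Icc (0 : ℝ) 1) :
    ∃ y : ι → ℝ, (∀ i, y i = 0 ∨ y i = 1) ∧ f y ≤ f x := by
  suffices H : ∀ S : Finset ι, ∃ y : ι → ℝ, (∀ i, y i ∈ Icc (0 : ℝ) 1) ∧
      (∀ i ∈ S, y i = 0 ∨ y i = 1) ∧ f y ≤ f x by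
    obtain ⟨y, -, hy, hle⟩ := H univ
    exact ⟨y, fun i => hy i (mem_univ i), hle⟩
  intro S
  induction S using Finset.induction_on with
  | empty => exact ⟨x, hx, by simp, le_rfl⟩
  | insert k S _ ih =>
    obtain ⟨y, hy, hyS, hyx⟩ := ih
    obtain ⟨b, hb, hby⟩ := exists_update_le_of_affine f y k (hy k) (hf y hy k)
    refine ⟨update y k b, ?_, ?_, hby.trans hyx⟩
    · refine forall_update_iff y (p := fun _ v => v ∈ Icc (0 : ℝ) 1) |>.2 ⟨?_, fun i _ => hy i⟩
      rcases hb with rfl | rfl <;> simp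
    · intro i hi
      rcases eq_or_ne i k with rfl | hik
      · simpa using hb
      · rw [update_of_ne hik]
        exact hyS i ((mem_insert.mp hi).resolve_left hik)

end Multiaffine

/-- The off-diagonal `ℓ¹` distance `‖A - x xᵀ‖_{OD,1}`. -/
def offDiagDist {ι : Type*} [Fintype ι] [DecidableEq ι] (A : Matrix ι ι ℝ) (x : ι → ℝ) : ℝ :=
  ∑ p ∈ univ.offDiag, |A p.1 p.2 - x p.1 * x p.2|

lemma offDiagDist_eq_affine {ι : Type*} [Fintype ι] [DecidableEq ι] (A : Matrix ι ι ℝ)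
    (hA : ∀ i j, A i j = 0 ∨ A i j = 1) (x : ι → ℝ) (hx : ∀ i, x i ∈ Icc (0 : ℝ) 1) (k : ι) :
    offDiagDist A x =
      (1 - x k) * offDiagDist A (update x k 0) + x k * offDiagDist A (update x k 1) := by
  simp only [offDiagDist, mul_sum, ← sum_add_distrib]
  refine sum_congr rfl fun ⟨i, j⟩ hij => ?_
  have hne : i ≠ j := (mem_offDiag.mp hij).2.2
  rcases eq_or_ne i k with rfl | hik
  · simp only [update_self, update_of_ne hne.symm, zero_mul, one_mul, sub_zero]
    exact abs_sub_mul_eq_affine (hA i j) (hx j) (hx i)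
  rcases eq_or_ne j k with rfl | hjk
  · simp only [update_self, update_of_ne hik, mul_comm (x i), zero_mul, one_mul, sub_zero]
    exact abs_sub_mul_eq_affine (hA i j) (hx i) (hx j)
  · simp only [update_of_ne hik, update_of_ne hjk]
    ring

theorem stmt1 (n : ℕ) (A : Matrix (Fin n) (Fin n) ℝ)
    (hA : ∀ i j, A i j = 0 ∨ A i j = 1) (h : Fin n → ℝ)
    (hh : ∀ i, 0 ≤ h i ∧ h i ≤ 1) :
    ∃ h' : Fin n → ℝ, (∀ i, h' i = 0 ∨ h' i = 1) ∧
      ∑ p ∈ Finset.univ.offDiag, |A p.1 p.2 - h' p.1 * h' p.2| ≤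
        ∑ p ∈ Finset.univ.offDiag, |A p.1 p.2 - h p.1 * h p.2| :=
  exists_binary_le_of_multiaffine (offDiagDist A) (offDiagDist_eq_affine A hA) h hh
end

section
/- Let A be an n×n binary matrix. Then min_{h ∈ {0,1}ⁿ} ∑_{i≠j} |A_{ij} − h_i h_j| = min_{h ∈ [0,1]ⁿ} ∑_{i≠j} |A_{ij} − h_i h_j|, i.e., the rank-one off-diagonal ℓ1 problem over [0,1]ⁿ always admits a binary optimal solution. -/
/-!
For binary `a` and `t ∈ [0, 1]` we have `|a - t| = a + (1 - 2a) t`, so on the box `[0, 1]ⁿ` every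
term `|A i j - h i h j|` with `i ≠ j` is an affine function of the product `h i h j`, which is
itself affine in each single coordinate. Hence the objective is affine in each coordinate
separately, and moving one fractional coordinate at a time to the better of its endpoints `0`, `1`
never increases it.
-/

open Finset Function

variable {ι : Type*}

lemma abs_binary_sub_eq {a t : ℝ} (ha : a = 0 ∨ a = 1) (ht₀ : 0 ≤ t) (ht₁ : t ≤ 1) :
    |a - t| = a + (1 - 2 * a) * t := by
  rcases ha with rfl | rfl
  · rw [abs_of_nonpos (by linarith)]; ring
  · rw [abs_of_nonneg (by linarith)]; ring

lemma mul_eq_of_update_zero_one [DecidableEq ι] (h : ι → ℝ) (a : ι) {i j : ι} (hij : i ≠ j) :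
    h i * h j = (1 - h a) * (update h a 0 i * update h a 0 j)
      + h a * (update h a 1 i * update h a 1 j) := by
  by_cases hi : i = a
  · subst hi
    simp only [update_self, update_of_ne hij.symm]
    ring
  · by_cases hj : j = a
    · subst hj
      simp only [update_self, update_of_ne hi]
      ring
    · simp only [update_of_ne hi, update_of_ne hj]
      ring

lemma update_mem_box [DecidableEq ι] {h : ι → ℝ} (hh : ∀ i, 0 ≤ h i ∧ h i ≤ 1) (a : ι) {s : ℝ}
    (hs : s = 0 ∨ s = 1) (i : ι) : 0 ≤ update h a s i ∧ update h a s i ≤ 1 := by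
  rcases eq_or_ne i a with rfl | hi
  · rcases hs with rfl | rfl <;> norm_num
  · rw [update_of_ne hi]; exact hh i

lemma exists_binary_le_of_affine_in_each_coord [Fintype ι] [DecidableEq ι] {f : (ι → ℝ) → ℝ}
    (hf : ∀ h : ι → ℝ, (∀ i, 0 ≤ h i ∧ h i ≤ 1) → ∀ a,
      f h = (1 - h a) * f (update h a 0) + h a * f (update h a 1))
    (h : ι → ℝ) (hh : ∀ i, 0 ≤ h i ∧ h i ≤ 1) :
    ∃ h' : ι → ℝ, (∀ i, h' i = 0 ∨ h' i = 1) ∧ f h' ≤ f h := by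
  suffices key : ∀ s : Finset ι, ∀ h : ι → ℝ, (∀ i, 0 ≤ h i ∧ h i ≤ 1) →
      (∀ i ∉ s, h i = 0 ∨ h i = 1) → ∃ h' : ι → ℝ, (∀ i, h' i = 0 ∨ h' i = 1) ∧ f h' ≤ f h from
    key univ h hh fun i hi => absurd (mem_univ i) hi
  intro s
  induction s using Finset.induction_on with
  | empty => exact fun h _ hbin => ⟨h, fun i => hbin i (notMem_empty i), le_rfl⟩
  | @insert a s _ ih =>
    intro h hh hbin
    have hround : ∀ r : ℝ, (r = 0 ∨ r = 1) →
        ∃ h' : ι → ℝ, (∀ i, h' i = 0 ∨ h' i = 1) ∧ f h' ≤ f (update h a r) := by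
      refine fun r hr => ih _ (update_mem_box hh a hr) fun i hi => ?_
      rcases eq_or_ne i a with rfl | hia
      · rwa [update_self]
      · rw [update_of_ne hia]; exact hbin i (by simp [hia, hi])
    obtain ⟨h₀, hbin₀, hle₀⟩ := hround 0 (.inl rfl)
    obtain ⟨h₁, hbin₁, hle₁⟩ := hround 1 (.inr rfl)
    have hsplit := hf h hh a
    obtain ⟨ha₀, ha₁⟩ := hh a
    rcases le_total (f (update h a 0)) (f (update h a 1)) with hcmp | hcmp
    · exact ⟨h₀, hbin₀, by nlinarith⟩
    · exact ⟨h₁, hbin₁, by nlinarith⟩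

noncomputable def offDiagL1 [Fintype ι] (A : Matrix ι ι ℝ) (h : ι → ℝ) : ℝ :=
  ∑ p ∈ univ.offDiag, |A p.1 p.2 - h p.1 * h p.2|

lemma offDiagL1_eq_sum_of_mem_box [Fintype ι] {A : Matrix ι ι ℝ}
    (hA : ∀ i j, A i j = 0 ∨ A i j = 1) {h : ι → ℝ} (hh : ∀ i, 0 ≤ h i ∧ h i ≤ 1) :
    offDiagL1 A h = ∑ p ∈ univ.offDiag, (A p.1 p.2 + (1 - 2 * A p.1 p.2) * (h p.1 * h p.2)) :=
  sum_congr rfl fun _ _ => abs_binary_sub_eq (hA _ _)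
    (mul_nonneg (hh _).1 (hh _).1) (mul_le_one₀ (hh _).2 (hh _).1 (hh _).2)

lemma offDiagL1_eq_update_zero_one [Fintype ι] [DecidableEq ι] {A : Matrix ι ι ℝ}
    (hA : ∀ i j, A i j = 0 ∨ A i j = 1) {h : ι → ℝ} (hh : ∀ i, 0 ≤ h i ∧ h i ≤ 1) (a : ι) :
    offDiagL1 A h = (1 - h a) * offDiagL1 A (update h a 0)
      + h a * offDiagL1 A (update h a 1) := by
  rw [offDiagL1_eq_sum_of_mem_box hA hh,
    offDiagL1_eq_sum_of_mem_box hA (update_mem_box hh a (.inl rfl)),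
    offDiagL1_eq_sum_of_mem_box hA (update_mem_box hh a (.inr rfl)),
    mul_sum, mul_sum, ← sum_add_distrib]
  refine sum_congr rfl fun p hp => ?_
  rw [mul_eq_of_update_zero_one h a (mem_offDiag.mp hp).2.2]
  ring

theorem stmt3 (n : ℕ) (A : Matrix (Fin n) (Fin n) ℝ)
    (hA : ∀ i j, A i j = 0 ∨ A i j = 1) :
    sInf {y : ℝ | ∃ h : Fin n → ℝ, (∀ i, h i = 0 ∨ h i = 1) ∧
        y = ∑ p ∈ Finset.univ.offDiag, |A p.1 p.2 - h p.1 * h p.2|} =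
      sInf {y : ℝ | ∃ h : Fin n → ℝ, (∀ i, 0 ≤ h i ∧ h i ≤ 1) ∧
        y = ∑ p ∈ Finset.univ.offDiag, |A p.1 p.2 - h p.1 * h p.2|} := by
  apply csInf_eq_csInf_of_forall_exists_le
  · rintro _ ⟨h, hbin, rfl⟩
    exact ⟨_, ⟨h, fun i => by rcases hbin i with e | e <;> norm_num [e], rfl⟩, le_rfl⟩
  · rintro _ ⟨h, hh, rfl⟩
    obtain ⟨h', hbin, hle⟩ := exists_binary_le_of_affine_in_each_coord
      (fun _ hh a => offDiagL1_eq_update_zero_one hA hh a) h hh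
    exact ⟨_, ⟨h', hbin, rfl⟩, hle⟩
end

section
/- Let A be the 3×3 matrix with rows (1,1,0), (1,1,1), (0,1,1). Then for every r ≥ 1 and every H ∈ ℝ^{3×r}, ‖A − HHᵀ‖_F ≥ √2 − 1. In particular A has no exact factorization A = HHᵀ for any r. -/
open Finset in
lemma stmt8_key (r : ℕ) (H : Matrix (Fin 3) (Fin r) ℝ) :
    (Real.sqrt 2 - 1)^2 ≤
      ∑ i, ∑ j, (((!![1, 1, 0; 1, 1, 1; 0, 1, 1] : Matrix (Fin 3) (Fin 3) ℝ)
        - H * H.transpose) i j)^2 := by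
  set A : Matrix (Fin 3) (Fin 3) ℝ := !![1, 1, 0; 1, 1, 1; 0, 1, 1] with hA
  set M : Matrix (Fin 3) (Fin 3) ℝ := A - H * H.transpose with hM
  set v : Fin 3 → ℝ := ![1, -Real.sqrt 2, 1] with hv
  have h2 : (Real.sqrt 2)^2 = 2 := Real.sq_sqrt (by norm_num)
  have hs : 1 ≤ Real.sqrt 2 := by nlinarith [Real.sqrt_nonneg 2]
  set q : ℝ := ∑ i, ∑ j, M i j * (v i * v j) with hqdef
  have hAv : ∑ i, ∑ j, A i j * (v i * v j) = 4 - 4 * Real.sqrt 2 := by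
    simp [hA, hv, Fin.sum_univ_three, Matrix.vecHead, Matrix.vecTail]
    nlinarith [h2]
  have hBv : ∑ i, ∑ j, (H * H.transpose) i j * (v i * v j)
      = ∑ k, (∑ i, v i * H i k)^2 := by
    have h1 : ∑ i, ∑ j, (H * H.transpose) i j * (v i * v j)
        = ∑ i : Fin 3, ∑ j : Fin 3, ∑ k, (v i * H i k) * (v j * H j k) := by
      simp only [Matrix.mul_apply, Matrix.transpose_apply, Finset.sum_mul]
      refine Finset.sum_congr rfl fun i _ => Finset.sum_congr rfl fun j _ =>
        Finset.sum_congr rfl fun k _ => by ring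
    rw [h1]
    rw [Finset.sum_congr rfl fun i _ => Finset.sum_comm (s := Finset.univ)
      (t := Finset.univ) (f := fun j k => (v i * H i k) * (v j * H j k))]
    rw [Finset.sum_comm]
    refine Finset.sum_congr rfl fun k _ => ?_
    rw [sq, Finset.sum_mul_sum]
  have hq_le : q ≤ 4 - 4 * Real.sqrt 2 := by
    have : q = (4 - 4 * Real.sqrt 2) - ∑ k, (∑ i, v i * H i k)^2 := by
      rw [hqdef, hM]
      simp only [Matrix.sub_apply, sub_mul, Finset.sum_sub_distrib]
      rw [hAv, hBv]
    rw [this]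
    have : (0:ℝ) ≤ ∑ k, (∑ i, v i * H i k)^2 := Finset.sum_nonneg fun k _ => sq_nonneg _
    linarith
  -- Cauchy-Schwarz over the product index
  have hprod : q = ∑ p : Fin 3 × Fin 3, M p.1 p.2 * (v p.1 * v p.2) := by
    rw [hqdef, ← Finset.sum_product']
    rfl
  have hS : ∑ i, ∑ j, (M i j)^2 = ∑ p : Fin 3 × Fin 3, (M p.1 p.2)^2 := by
    rw [← Finset.sum_product']
    rfl
  have hv2' : ∑ i : Fin 3, ∑ j : Fin 3, (v i * v j)^2 = 16 := by
    simp [hv, Fin.sum_univ_three, Matrix.vecHead, Matrix.vecTail]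
    nlinarith [h2]
  have hv2 : ∑ p : Fin 3 × Fin 3, (v p.1 * v p.2)^2 = 16 := by
    rw [← hv2', ← Finset.sum_product']
    rfl
  have hCS' : q^2 ≤ (∑ i, ∑ j, (M i j)^2) * 16 := by
    have h := Finset.sum_mul_sq_le_sq_mul_sq (Finset.univ : Finset (Fin 3 × Fin 3))
      (fun p => M p.1 p.2) (fun p => v p.1 * v p.2)
    rw [← hprod, ← hS, hv2] at h
    exact h
  nlinarith [hq_le, hCS', h2, hs]

theorem stmt8 (A : Matrix (Fin 3) (Fin 3) ℝ)
    (hA : A = !![1, 1, 0; 1, 1, 1; 0, 1, 1]) :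
    (∀ (r : ℕ), 1 ≤ r → ∀ H : Matrix (Fin 3) (Fin r) ℝ,
      Real.sqrt 2 - 1 ≤ Real.sqrt (∑ i, ∑ j, ((A - H * H.transpose) i j) ^ 2)) ∧
      ∀ (r : ℕ) (H : Matrix (Fin 3) (Fin r) ℝ), A ≠ H * H.transpose := by
  subst hA
  have hs : 1 ≤ Real.sqrt 2 := by
    nlinarith [Real.sq_sqrt (by norm_num : (2:ℝ) ≥ 0), Real.sqrt_nonneg 2]
  constructor
  · intro r _ H
    have hk := stmt8_key r H
    calc Real.sqrt 2 - 1 = Real.sqrt ((Real.sqrt 2 - 1)^2) := by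
          rw [Real.sqrt_sq (by linarith)]
      _ ≤ _ := Real.sqrt_le_sqrt hk
  · intro r H heq
    have hk := stmt8_key r H
    rw [← heq] at hk
    simp at hk
    nlinarith [Real.sq_sqrt (by norm_num : (2:ℝ) ≥ 0)]
end

section
/- Let a ∈ ℝ₊ⁿ with ∑ a_i = 1, and suppose the indices are ordered so that b₁/a₁ ≤ b₂/a₂ ≤ … ≤ b_n/a_n (all a_i > 0). Let k be the smallest index with ∑_{i=1}^k a_i ≥ 1/2. Then x* = b_k/a_k minimizes g(x) = ∑_{i=1}^n |a_i x − b_i| over ℝ. -/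
/-!
Writing `c i = b i / a i`, the objective is `g x = ∑ a i * |x - c i|`, a convex piecewise-linear
function whose right slope at `c k` is `∑_{i ≤ k} a i - ∑_{i > k} a i ≥ 0` and whose left slope is
`∑_{i < k} a i - ∑_{i ≥ k} a i ≤ 0`. Each term `a i * |x - c i|` exceeds its value at `c k` by at
least its one-sided slope times `x - c k`, so summing gives `g x ≥ g (c k)` on both sides.
-/

open Finset

section WeightedMedian

variable {ι : Type*} (s : Finset ι) (p : ι → Prop) [DecidablePred p] {w c : ι → ℝ} {m x : ℝ}

theorem sum_mul_abs_sub_le_of_le (hw : ∀ i ∈ s, 0 ≤ w i)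
    (hlo : ∀ i ∈ s, p i → c i ≤ m) (hhi : ∀ i ∈ s, ¬p i → m ≤ c i)
    (hbal : ∑ i ∈ s with ¬p i, w i ≤ ∑ i ∈ s with p i, w i) (hx : m ≤ x) :
    ∑ i ∈ s, w i * |m - c i| ≤ ∑ i ∈ s, w i * |x - c i| := by
  have hp : ∑ i ∈ s with p i, (w i * |m - c i| + w i * (x - m)) ≤
      ∑ i ∈ s with p i, w i * |x - c i| := by
    refine sum_le_sum fun i hi => ?_
    obtain ⟨hs, hpi⟩ := mem_filter.1 hi
    rw [abs_of_nonneg (sub_nonneg.2 (hlo i hs hpi)), ← mul_add]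
    exact mul_le_mul_of_nonneg_left (by linarith [le_abs_self (x - c i)]) (hw i hs)
  have hnp : ∑ i ∈ s with ¬p i, (w i * |m - c i| - w i * (x - m)) ≤
      ∑ i ∈ s with ¬p i, w i * |x - c i| := by
    refine sum_le_sum fun i hi => ?_
    obtain ⟨hs, hpi⟩ := mem_filter.1 hi
    rw [abs_of_nonpos (sub_nonpos.2 (hhi i hs hpi)), ← mul_sub]
    exact mul_le_mul_of_nonneg_left (by linarith [neg_abs_le (x - c i)]) (hw i hs)
  rw [sum_add_distrib, ← sum_mul] at hp
  rw [sum_sub_distrib, ← sum_mul] at hnp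
  rw [← sum_filter_add_sum_filter_not s p,
    ← sum_filter_add_sum_filter_not s p (fun i => _ * |x - _|)]
  nlinarith [mul_nonneg (sub_nonneg.2 hbal) (sub_nonneg.2 hx)]

theorem sum_mul_abs_sub_le_of_ge (hw : ∀ i ∈ s, 0 ≤ w i)
    (hhi : ∀ i ∈ s, p i → m ≤ c i) (hlo : ∀ i ∈ s, ¬p i → c i ≤ m)
    (hbal : ∑ i ∈ s with ¬p i, w i ≤ ∑ i ∈ s with p i, w i) (hx : x ≤ m) :
    ∑ i ∈ s, w i * |m - c i| ≤ ∑ i ∈ s, w i * |x - c i| := by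
  have := sum_mul_abs_sub_le_of_le (c := fun i => -c i) (m := -m) (x := -x) s p hw
    (fun i hs hpi => neg_le_neg (hhi i hs hpi)) (fun i hs hpi => neg_le_neg (hlo i hs hpi))
    hbal (neg_le_neg hx)
  simpa only [neg_sub_neg, abs_sub_comm] using this

end WeightedMedian

theorem sum_filter_lt_lt_of_forall_lt {α M : Type*} [LinearOrder α] [PredOrder α] [Fintype α]
    [AddCommMonoid M] [LT M] (w : α → M) {k : α} {t : M} (ht : 0 < t)
    (h : ∀ j < k, ∑ i with i ≤ j, w i < t) : ∑ i with i < k, w i < t := by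
  by_cases hk : IsMin k
  · rwa [filter_false_of_mem fun i _ => hk.not_lt, sum_empty]
  · simpa only [Order.le_pred_iff_of_not_isMin hk] using h _ (Order.pred_lt_of_not_isMin hk)

theorem abs_mul_sub_eq_mul_abs_sub_div {a : ℝ} (ha : 0 < a) (b y : ℝ) :
    |a * y - b| = a * |y - b / a| := by
  rw [← abs_of_pos ha, ← abs_mul, abs_of_pos ha, mul_sub, mul_div_cancel₀ _ ha.ne']

theorem stmt15 (n : ℕ) (a b : Fin n → ℝ) (ha : ∀ i, 0 < a i)
    (hsum : ∑ i, a i = 1)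
    (hord : ∀ i j : Fin n, i ≤ j → b i / a i ≤ b j / a j)
    (k : Fin n)
    (hk : (1 : ℝ) / 2 ≤ ∑ i ∈ Finset.univ.filter (· ≤ k), a i)
    (hk' : ∀ j : Fin n, j < k → ∑ i ∈ Finset.univ.filter (· ≤ j), a i < 1 / 2) :
    ∀ x : ℝ, (∑ i, |a i * (b k / a k) - b i|) ≤ ∑ i, |a i * x - b i| := by
  intro x
  simp only [abs_mul_sub_eq_mul_abs_sub_div (ha _)]
  have hw : ∀ i ∈ univ, 0 ≤ a i := fun i _ => (ha i).le
  rcases le_total (b k / a k) x with hx | hx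
  · have hsplit := sum_filter_add_sum_filter_not univ (· ≤ k) a
    refine sum_mul_abs_sub_le_of_le univ (· ≤ k) hw (fun i _ hi => hord i k hi)
      (fun i _ hi => hord k i (le_of_not_ge hi)) ?_ hx
    linarith
  · have hsplit := sum_filter_add_sum_filter_not univ (k ≤ ·) a
    have hlt := sum_filter_lt_lt_of_forall_lt a (by norm_num) hk'
    simp only [not_le] at hsplit
    refine sum_mul_abs_sub_le_of_ge univ (k ≤ ·) hw (fun i _ hi => hord k i hi)
      (fun i _ hi => hord i k (le_of_not_ge hi)) ?_ hx
    simp only [not_le]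
    linarith
end

section
/- Let A be an n×n binary matrix and h ∈ [0,1]ⁿ. For a fixed index k, the function f(x) = ∑_{j≠k} |A_{kj} − x h_j| restricted to x ∈ [0,1] attains its minimum at x = 0 or x = 1. -/
/-!
On `[0, 1]` no term `|A k j - x * h j|` changes sign: with `A k j ∈ {0, 1}` and
`x * h j ∈ [0, 1]` it equals `A k j + (1 - 2 A k j) x h j`. So the sum is affine in `x` there,
and an affine function on a segment is minimised at an endpoint.
-/

open Set

lemma abs_sub_eq_of_binary {a t : ℝ} (ha : a = 0 ∨ a = 1) (ht : t ∈ Icc (0 : ℝ) 1) :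
    |a - t| = a + (1 - 2 * a) * t := by
  rcases ha with rfl | rfl
  · rw [abs_of_nonpos (by linarith [ht.1])]; ring
  · rw [abs_of_nonneg (by linarith [ht.2])]; ring

lemma sum_abs_sub_mul_eq_of_binary {ι : Type*} (s : Finset ι) {a b : ι → ℝ}
    (ha : ∀ j, a j = 0 ∨ a j = 1) (hb : ∀ j, b j ∈ Icc (0 : ℝ) 1) {x : ℝ}
    (hx : x ∈ Icc (0 : ℝ) 1) :
    ∑ j ∈ s, |a j - x * b j| = ∑ j ∈ s, a j + x * ∑ j ∈ s, (1 - 2 * a j) * b j := by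
  rw [Finset.mul_sum, ← Finset.sum_add_distrib]
  refine Finset.sum_congr rfl fun j _ => ?_
  rw [abs_sub_eq_of_binary (ha j) (unitInterval.mul_mem hx (hb j))]
  ring

lemma forall_le_zero_or_forall_le_one_of_eqOn_affine {f : ℝ → ℝ} {c d : ℝ}
    (hf : EqOn f (fun x => c + x * d) (Icc 0 1)) :
    (∀ x ∈ Icc (0 : ℝ) 1, f 0 ≤ f x) ∨ ∀ x ∈ Icc (0 : ℝ) 1, f 1 ≤ f x := by
  have h0 : f 0 = c := by simpa using hf (left_mem_Icc.2 zero_le_one)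
  have h1 : f 1 = c + d := by simpa using hf (right_mem_Icc.2 zero_le_one)
  rcases le_total 0 d with hd | hd
  · refine .inl fun x hx => ?_
    rw [h0, hf hx]
    nlinarith [hx.1]
  · refine .inr fun x hx => ?_
    rw [h1, hf hx]
    nlinarith [hx.2]

theorem stmt16 (n : ℕ) (A : Matrix (Fin n) (Fin n) ℝ)
    (hA : ∀ i j, A i j = 0 ∨ A i j = 1)
    (h : Fin n → ℝ) (hh : ∀ i, 0 ≤ h i ∧ h i ≤ 1) (k : Fin n) :
    (∀ x ∈ Set.Icc (0 : ℝ) 1,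
        (∑ j ∈ Finset.univ \ {k}, |A k j - (0 : ℝ) * h j|) ≤
          ∑ j ∈ Finset.univ \ {k}, |A k j - x * h j|) ∨
      ∀ x ∈ Set.Icc (0 : ℝ) 1,
        (∑ j ∈ Finset.univ \ {k}, |A k j - (1 : ℝ) * h j|) ≤
          ∑ j ∈ Finset.univ \ {k}, |A k j - x * h j| :=
  forall_le_zero_or_forall_le_one_of_eqOn_affine fun _ hx =>
    sum_abs_sub_mul_eq_of_binary _ (hA k) hh hx
end

section
/- Let H ∈ ℝ^{n×r}, l ∈ {1,…,r}, k ∈ {1,…,n}, and P = A − ∑_{t≠l} H_{:,t}H_{:,t}ᵀ where A is symmetric. Then b_k := hᵀP_{:,k} − h_k P_{kk} with h = H_{:,l} satisfies b_k = H_{:,l}ᵀ A_{:,k} − H_{:,l}ᵀ(HHᵀ)_{:,k} − H_{k,l}(A_{kk} + H_{k,l}² − ‖H_{:,l}‖₂² − ‖H_{k,:}‖₂²). -/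
/-! Dropping column `l` from `H Hᵀ` gives `P = A - H Hᵀ + h hᵀ` with `h = H_{:,l}`; substituting this
into `hᵀ P_{:,k}` and `P_{kk}` leaves a ring identity. -/

open Matrix Finset

section

variable {R m n : Type*} [CommRing R] [Fintype n] [DecidableEq n]

theorem Matrix.sum_sdiff_singleton_mul_eq_mul_transpose_sub (H : Matrix m n R) (l : n)
    (s t : m) :
    ∑ u ∈ univ \ {l}, H s u * H t u = (H * Hᵀ) s t - H s l * H t l := by
  rw [sum_sdiff_eq_sub (subset_univ _), sum_singleton]
  rfl

variable {A P : Matrix m m R} {H : Matrix m n R} {l : n}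

theorem Matrix.apply_eq_of_eq_sub_sum_sdiff
    (hP : ∀ s t, P s t = A s t - ∑ u ∈ univ \ {l}, H s u * H t u) (s t : m) :
    P s t = A s t - (H * Hᵀ) s t + H s l * H t l := by
  rw [hP, sum_sdiff_singleton_mul_eq_mul_transpose_sub]
  ring

theorem Matrix.sum_col_mul_eq_of_eq_sub_sum_sdiff [Fintype m]
    (hP : ∀ s t, P s t = A s t - ∑ u ∈ univ \ {l}, H s u * H t u) (k : m) :
    ∑ i, H i l * P i k =
      (∑ i, H i l * A i k) - (∑ i, H i l * (H * Hᵀ) i k) + (∑ i, H i l ^ 2) * H k l := by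
  simp only [apply_eq_of_eq_sub_sum_sdiff hP, mul_add, mul_sub, sum_add_distrib,
    sum_sub_distrib, sum_mul]
  congr 1
  exact sum_congr rfl fun i _ ↦ by ring

theorem Matrix.diag_eq_of_eq_sub_sum_sdiff
    (hP : ∀ s t, P s t = A s t - ∑ u ∈ univ \ {l}, H s u * H t u) (k : m) :
    P k k = A k k - (∑ t, H k t ^ 2) + H k l ^ 2 := by
  simp only [apply_eq_of_eq_sub_sum_sdiff hP, mul_apply, transpose_apply, sq]

end

theorem stmt19_general (n r : ℕ) (A : Matrix (Fin n) (Fin n) ℝ)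
    (H : Matrix (Fin n) (Fin r) ℝ) (l : Fin r) (k : Fin n)
    (P : Matrix (Fin n) (Fin n) ℝ)
    (hPdef : ∀ s t, P s t = A s t - ∑ u ∈ Finset.univ \ {l}, H s u * H t u) :
    (∑ i, H i l * P i k) - H k l * P k k =
      (∑ i, H i l * A i k) - (∑ i, H i l * (H * H.transpose) i k) -
        H k l * (A k k + H k l ^ 2 - (∑ i, H i l ^ 2) - (∑ t, H k t ^ 2)) := by
  rw [sum_col_mul_eq_of_eq_sub_sum_sdiff hPdef, diag_eq_of_eq_sub_sum_sdiff hPdef]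
  ring

theorem stmt19 (n r : ℕ) (A : Matrix (Fin n) (Fin n) ℝ) (hsym : A.IsSymm)
    (H : Matrix (Fin n) (Fin r) ℝ) (l : Fin r) (k : Fin n)
    (P : Matrix (Fin n) (Fin n) ℝ)
    (hPdef : ∀ s t, P s t = A s t - ∑ u ∈ Finset.univ \ {l}, H s u * H t u) :
    (∑ i, H i l * P i k) - H k l * P k k =
      (∑ i, H i l * A i k) - (∑ i, H i l * (H * H.transpose) i k) -
        H k l * (A k k + H k l ^ 2 - (∑ i, H i l ^ 2) - (∑ t, H k t ^ 2)) :=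
  stmt19_general n r A H l k P hPdef
end
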